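/- arXiv:0802.3832 — 2 statements merged into one kernel-verified Lean document; each statement's English description precedes it below -/
import Mathlib

section
/- For all natural numbers n and all complex b, c with c not equal to any of 0, -1, ..., -(n-1), the terminating hypergeometric sum ∑_{k=0}^{n} ((-n)_k (b)_k)/(k! (c)_k) equals (c-b)_n/(c)_n (Chu–Vandermonde identity), where (z)_k denotes the rising factorial z(z+1)···(z+k-1). -/
/-!
Since `(c)_n = (c)_k (c+k)_{n-k}` and `(-n)_k / k! = (-1)^k C(n,k)`, multiplying by `(c)_n` turns the
identity into `∑ C(n,k) (-1)^k (b)_k (c+k)_{n-k} = (c-b)_n`. In falling factorials `x↓k`, this reads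
`∑ C(n,k) (-b)↓k (c+n-1)↓(n-k) = (-b + (c+n-1))↓n`: the Vandermonde (binomial) theorem for falling
factorials.
-/

/-- The Pochhammer symbol (rising factorial) `(z)_k = ∏_{j=0}^{k-1} (z+j)`. -/
noncomputable def poch (z : ℂ) (k : ℕ) : ℂ := ∏ j ∈ Finset.range k, (z + j)

open Finset Polynomial

section FallingFactorial

variable {R : Type*} [CommRing R]

theorem descPochhammer_smeval_eq_eval (r : R) (n : ℕ) :
    (descPochhammer ℤ n).smeval r = (descPochhammer R n).eval r := by
  rw [← aeval_eq_smeval, aeval_def, eval₂_eq_eval_map, descPochhammer_map]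

theorem descPochhammer_eval_add (r s : R) (n : ℕ) :
    (descPochhammer R n).eval (r + s) = ∑ k ∈ range (n + 1),
      n.choose k * ((descPochhammer R k).eval r * (descPochhammer R (n - k)).eval s) := by
  simp only [← descPochhammer_smeval_eq_eval]
  rw [Ring.descPochhammer_smeval_add n (Commute.all r s), Nat.sum_antidiagonal_eq_sum_range_succ_mk]

end FallingFactorial

theorem poch_eq_ascPochhammer_eval (z : ℂ) (k : ℕ) : poch z k = (ascPochhammer ℂ k).eval z := by
  induction k with
  | zero => simp [poch]
  | succ k ih => rw [poch, prod_range_succ, ← poch, ih, ascPochhammer_succ_eval]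

theorem poch_eq_descPochhammer_eval (z : ℂ) (k : ℕ) :
    poch z k = (descPochhammer ℂ k).eval (z + k - 1) := by
  rw [descPochhammer_eval_eq_ascPochhammer, poch_eq_ascPochhammer_eval]
  ring_nf

theorem descPochhammer_eval_neg (z : ℂ) (k : ℕ) :
    (descPochhammer ℂ k).eval (-z) = (-1) ^ k * poch z k := by
  rw [poch_eq_ascPochhammer_eval, ← neg_neg z, ascPochhammer_eval_neg_eq_descPochhammer, neg_neg,
    ← mul_assoc, ← mul_pow, neg_one_mul, neg_neg, one_pow, one_mul]

theorem poch_neg_natCast (n k : ℕ) :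
    poch (-(n : ℂ)) k = (-1) ^ k * k.factorial * n.choose k := by
  rw [poch_eq_ascPochhammer_eval, ascPochhammer_eval_neg_eq_descPochhammer,
    descPochhammer_eval_eq_descFactorial, Nat.descFactorial_eq_factorial_mul_choose]
  push_cast
  ring

theorem poch_add (z : ℂ) (k m : ℕ) : poch z (k + m) = poch z k * poch (z + k) m := by
  simp only [poch, prod_range_add, Nat.cast_add, add_assoc]

theorem poch_ne_zero {z : ℂ} {k : ℕ} (h : ∀ j < k, z + j ≠ 0) : poch z k ≠ 0 :=
  prod_ne_zero_iff.mpr fun j hj => h j (mem_range.mp hj)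

theorem sum_choose_mul_neg_one_pow_mul_poch (b c : ℂ) (n : ℕ) :
    ∑ k ∈ range (n + 1), n.choose k * ((-1) ^ k * poch b k * poch (c + k) (n - k))
      = poch (c - b) n := by
  rw [poch_eq_descPochhammer_eval, show c - b + n - 1 = -b + (c + n - 1) by ring,
    descPochhammer_eval_add]
  refine sum_congr rfl fun k hk => ?_
  have hkn : k ≤ n := Nat.lt_succ_iff.mp (mem_range.mp hk)
  rw [descPochhammer_eval_neg, poch_eq_descPochhammer_eval (c + k), Nat.cast_sub hkn]
  ring_nf

/-- Chu–Vandermonde: `F(-n, b, c; 1) = (c-b)_n / (c)_n`. -/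
theorem chu_vandermonde (n : ℕ) (b c : ℂ)
    (hc : ∀ j : ℕ, j < n → c + (j : ℂ) ≠ 0) :
    ∑ k ∈ Finset.range (n + 1),
        poch (-(n : ℂ)) k * poch b k / ((k.factorial : ℂ) * poch c k)
      = poch (c - b) n / poch c n := by
  rw [← sum_choose_mul_neg_one_pow_mul_poch, sum_div]
  refine sum_congr rfl fun k hk => ?_
  have hkn : k ≤ n := Nat.lt_succ_iff.mp (mem_range.mp hk)
  have hsplit : poch c n = poch c k * poch (c + k) (n - k) := by
    rw [← poch_add, Nat.add_sub_cancel' hkn]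
  have hck : poch c k * poch (c + k) (n - k) ≠ 0 := hsplit ▸ poch_ne_zero hc
  rw [hsplit, poch_neg_natCast]
  field_simp [left_ne_zero_of_mul hck, right_ne_zero_of_mul hck, k.factorial_ne_zero]
end

section
/- Terminating Pfaff transformation: for all natural n, complex b, c, x with x ≠ 1 and (c)_k ≠ 0 for 0 ≤ k ≤ n, one has ∑_{k=0}^{n} ((-n)_k (b)_k)/(k! (c)_k) x^k = (1-x)^n · ∑_{k=0}^{n} ((-n)_k (c-b)_k)/(k! (c)_k) (x/(x-1))^k. -/
open Finset

lemma poch_zero (z : ℂ) : poch z 0 = 1 := prod_range_zero _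

lemma poch_one (z : ℂ) : poch z 1 = z := by simp [poch]

lemma poch_succ_right (z : ℂ) (k : ℕ) : poch z (k + 1) = poch z k * (z + k) :=
  prod_range_succ _ _

lemma poch_succ_left (z : ℂ) (k : ℕ) : poch z (k + 1) = z * poch (z + 1) k := by
  rw [poch, prod_range_succ', mul_comm]
  simp [poch, add_assoc, add_comm (1 : ℂ)]

lemma poch_neg_natCast_succ_self (n : ℕ) : poch (-(n : ℂ)) (n + 1) = 0 :=
  prod_eq_zero (self_mem_range_succ n) (by simp)

lemma poch_sub_one_succ (z : ℂ) (k : ℕ) :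
    poch (z - 1) (k + 1) = poch z (k + 1) - (k + 1) * poch z k := by
  rw [poch_succ_left, sub_add_cancel, poch_succ_right]
  ring

lemma poch_add_one_ne_zero {c : ℂ} {k : ℕ} (h : poch c (k + 1) ≠ 0) : poch (c + 1) k ≠ 0 :=
  right_ne_zero_of_mul (poch_succ_left c k ▸ h)

lemma mul_poch_div_poch (a c : ℂ) (k : ℕ) (hc : poch c k ≠ 0) (hc' : poch (c + 1) k ≠ 0) :
    c * (poch a k / poch c k) =
      (c - a) * (poch a k / poch (c + 1) k) + a * (poch (a + 1) k / poch (c + 1) k) := by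
  have ha : poch a k * (a + k) = a * poch (a + 1) k := by rw [← poch_succ_right, poch_succ_left]
  have hc₁ : poch c k * (c + k) = c * poch (c + 1) k := by rw [← poch_succ_right, poch_succ_left]
  field_simp
  linear_combination poch c k * ha - poch a k * hc₁

noncomputable def hypergeomTerm (n : ℕ) (a c x : ℂ) (k : ℕ) : ℂ :=
  poch (-(n : ℂ)) k * poch a k / ((k.factorial : ℂ) * poch c k) * x ^ k

/-- The terminating Gauss series `₂F₁(-n, a; c; x)`. -/
noncomputable def terminatingHypergeom (n : ℕ) (a c x : ℂ) : ℂ :=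
  ∑ k ∈ range (n + 1), hypergeomTerm n a c x k

lemma hypergeomTerm_zero (n : ℕ) (a c x : ℂ) : hypergeomTerm n a c x 0 = 1 := by
  simp [hypergeomTerm, poch_zero]

lemma hypergeomTerm_succ_self (n : ℕ) (a c x : ℂ) : hypergeomTerm n a c x (n + 1) = 0 := by
  simp [hypergeomTerm, poch_neg_natCast_succ_self]

lemma hypergeomTerm_eq (n : ℕ) (a c x : ℂ) (k : ℕ) :
    hypergeomTerm n a c x k = poch (-(n : ℂ)) k * x ^ k / k.factorial * (poch a k / poch c k) := by
  rw [hypergeomTerm]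
  ring

lemma hypergeomTerm_succ_succ (n k : ℕ) (a c x : ℂ) :
    hypergeomTerm (n + 1) a c x (k + 1) =
      hypergeomTerm n a c x (k + 1) - x * a / c * hypergeomTerm n (a + 1) (c + 1) x k := by
  have hk : ((k : ℂ) + 1) ≠ 0 := Nat.cast_add_one_ne_zero k
  have hn : -((n + 1 : ℕ) : ℂ) = -(n : ℂ) - 1 := by push_cast; ring
  rw [hypergeomTerm, hypergeomTerm, hypergeomTerm, hn, poch_sub_one_succ, sub_mul, sub_div, sub_mul]
  congr 1
  rw [poch_succ_left a, poch_succ_left c, Nat.factorial_succ, pow_succ]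
  push_cast
  rw [mul_assoc _ (k.factorial : ℂ), mul_assoc _ (poch _ k), mul_div_mul_left _ _ hk]
  ring

lemma terminatingHypergeom_succ (n : ℕ) (a c x : ℂ) :
    terminatingHypergeom (n + 1) a c x =
      terminatingHypergeom n a c x - x * a / c * terminatingHypergeom n (a + 1) (c + 1) x := by
  have hextend :
      terminatingHypergeom n a c x = ∑ k ∈ range (n + 1 + 1), hypergeomTerm n a c x k := by
    rw [sum_range_succ, hypergeomTerm_succ_self, add_zero, terminatingHypergeom]
  rw [hextend, terminatingHypergeom, terminatingHypergeom, sum_range_succ' _ (n + 1),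
    sum_range_succ' _ (n + 1),
    hypergeomTerm_zero, hypergeomTerm_zero, mul_sum, add_sub_right_comm, ← sum_sub_distrib]
  simp only [hypergeomTerm_succ_succ]

lemma mul_terminatingHypergeom (n : ℕ) (a c x : ℂ) (hc : ∀ k ≤ n, poch c k ≠ 0)
    (hc' : ∀ k ≤ n, poch (c + 1) k ≠ 0) :
    c * terminatingHypergeom n a c x =
      (c - a) * terminatingHypergeom n a (c + 1) x +
        a * terminatingHypergeom n (a + 1) (c + 1) x := by
  simp only [terminatingHypergeom, mul_sum, ← sum_add_distrib]
  refine sum_congr rfl fun k hk => ?_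
  have hkn : k ≤ n := Nat.lt_succ_iff.mp (mem_range.mp hk)
  simp only [hypergeomTerm_eq]
  linear_combination poch (-(n : ℂ)) k * x ^ k / k.factorial *
    mul_poch_div_poch a c k (hc k hkn) (hc' k hkn)

theorem terminatingHypergeom_pfaff (n : ℕ) (b c x : ℂ) (hx : x ≠ 1)
    (hc : ∀ k ≤ n, poch c k ≠ 0) :
    terminatingHypergeom n b c x =
      (1 - x) ^ n * terminatingHypergeom n (c - b) c (x / (x - 1)) := by
  induction n generalizing b c with
  | zero => simp [terminatingHypergeom, hypergeomTerm_zero]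
  | succ n ih =>
    have hc₀ : c ≠ 0 := poch_one c ▸ hc 1 (by omega)
    have hcn : ∀ k ≤ n, poch c k ≠ 0 := fun k hk => hc k (by omega)
    have hc₁ : ∀ k ≤ n, poch (c + 1) k ≠ 0 := fun k hk =>
      poch_add_one_ne_zero (hc (k + 1) (by omega))
    have hy : (1 - x) * (x / (x - 1)) = -x := by
      field_simp [sub_ne_zero.mpr hx]
      ring
    rw [terminatingHypergeom_succ, terminatingHypergeom_succ, ih b c hcn, ih (b + 1) (c + 1) hc₁,
      add_sub_add_right_eq_sub, pow_succ]
    set y := x / (x - 1)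
    set F := terminatingHypergeom n (c - b) c y
    set G := terminatingHypergeom n (c - b) (c + 1) y
    set H := terminatingHypergeom n (c - b + 1) (c + 1) y
    have hgauss : F = b / c * G + (c - b) / c * H := by
      have h := mul_terminatingHypergeom n (c - b) c y hcn hc₁
      rw [sub_sub_cancel] at h
      field_simp
      linear_combination h
    linear_combination (1 - x) ^ n * (x * hgauss + (c - b) / c * H * hy)

/-- Terminating Pfaff transformation. -/
theorem pfaff_transformation (n : ℕ) (b c x : ℂ) (hx : x ≠ 1)
    (hc : ∀ k : ℕ, k ≤ n → poch c k ≠ 0) :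
    ∑ k ∈ Finset.range (n + 1),
        poch (-(n : ℂ)) k * poch b k / ((k.factorial : ℂ) * poch c k) * x ^ k
      = (1 - x) ^ n *
          ∑ k ∈ Finset.range (n + 1),
            poch (-(n : ℂ)) k * poch (c - b) k / ((k.factorial : ℂ) * poch c k)
              * (x / (x - 1)) ^ k :=
  terminatingHypergeom_pfaff n b c x hx hc
end
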